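/- arXiv:2107.02705 — 3 statements merged into one kernel-verified Lean document; each statement's English description precedes it below -/
import Mathlib

section
/- Suppose R is a principal ideal domain, n > 2, and p_1,…,p_n ∈ R are pairwise nonassociate primes. Suppose a_i = Π_{j≠i} p_j^{e_{i,j}} for 1 ≤ i ≤ n, where the exponents satisfy e_{1,j} ≤ e_{i,j} whenever 1, i, j are distinct, and suppose (a_1,…,a_n) is unimodular. Then S = U_1 and {u(1,2),…,u(1,n)} is an R-basis of S. -/
/-!
Write `a₁ = p_k^{e_{1,k}} · d_k`. Every `a_i` with `i ≠ k` is divisible by `p_k^{e_{1,k}}`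
while `p_k ∤ a_k`, so `p_k^{e_{1,k}}` divides the `k`-th coordinate of every solution `x`;
and `d_k` divides both `a₁` and `a_k` (this is where `e_{1,j} ≤ e_{k,j}` enters), hence their
gcd `c_k`. Thus `a₁ ∣ x_k c_k` for all `k ≠ 1`. Since `a₁ x = Σ_k x_k v(1,k) = Σ_k x_k c_k u(1,k)`
for every solution, cancelling `a₁` exhibits `x` as an `R`-combination of the `u(1,k)`, and these
are independent because `u(1,k)` is the only one with a nonzero `k`-th coordinate.
-/

open Finset

section Divisibility

variable {R : Type*} [CommRing R]

theorem dvd_of_span_singleton_eq_span_pair {c x y d : R}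
    (hc : Ideal.span {c} = Ideal.span {x, y}) (hx : d ∣ x) (hy : d ∣ y) : d ∣ c := by
  obtain ⟨α, β, rfl⟩ := Ideal.mem_span_pair.1 (hc ▸ Ideal.mem_span_singleton_self c)
  exact dvd_add (dvd_mul_of_dvd_right hx α) (dvd_mul_of_dvd_right hy β)

variable {ι : Type*} {p : ι → R}

theorem not_dvd_prod_pow_of_notMem [IsDomain R] (hp : ∀ j, Prime (p j))
    (hpna : ∀ i j, i ≠ j → ¬Associated (p i) (p j)) (f : ι → ℕ) {s : Finset ι} {k : ι}
    (hk : k ∉ s) : ¬p k ∣ ∏ j ∈ s, p j ^ f j := by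
  intro h
  obtain ⟨j, hj, hdvd⟩ := ((hp k).dvd_finsetProd_iff _).1 h
  exact hpna k j (by rintro rfl; exact hk hj)
    ((hp k).associated_of_dvd (hp j) ((hp k).dvd_of_dvd_pow hdvd))

variable [Fintype ι] [DecidableEq ι] {e : ι → ι → ℕ} {a : ι → R} {i₀ : ι}

theorem pow_dvd_of_exponent_le (ha : ∀ i, a i = ∏ j ∈ univ.erase i, p j ^ e i j)
    (he : ∀ i j, i ≠ i₀ → j ≠ i₀ → i ≠ j → e i₀ j ≤ e i j) {i k : ι} (hk : k ≠ i₀)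
    (hi : i ≠ k) : p k ^ e i₀ k ∣ a i := by
  rw [ha i]
  refine (pow_dvd_pow _ ?_).trans (dvd_prod_of_mem _ (mem_erase.2 ⟨hi.symm, mem_univ k⟩))
  by_cases hi₀ : i = i₀
  · rw [hi₀]
  · exact he i k hi₀ hk hi

theorem prod_erase_erase_dvd (ha : ∀ i, a i = ∏ j ∈ univ.erase i, p j ^ e i j)
    (he : ∀ i j, i ≠ i₀ → j ≠ i₀ → i ≠ j → e i₀ j ≤ e i j) {k : ι} (hk : k ≠ i₀) :
    ∏ j ∈ (univ.erase i₀).erase k, p j ^ e i₀ j ∣ a k := by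
  rw [ha k]
  refine (prod_dvd_prod_of_dvd _ _ fun j hj => pow_dvd_pow (p j) ?_).trans
    (prod_dvd_prod_of_subset _ _ _ fun j hj => ?_)
  · simp only [mem_erase, mem_univ, and_true] at hj
    exact he k j hk hj.2 (Ne.symm hj.1)
  · simp only [mem_erase, mem_univ, and_true] at hj ⊢
    exact hj.1

variable [IsDomain R]

theorem pow_dvd_of_sum_mul_eq_zero {x : ι → R} (hx : ∑ i, a i * x i = 0) {q : R}
    (hq : Prime q) {k : ι} (hqk : ¬q ∣ a k) {n : ℕ} (hn : ∀ i ≠ k, q ^ n ∣ a i) :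
    q ^ n ∣ x k := by
  refine hq.pow_dvd_of_dvd_mul_left n hqk ?_
  have hk : a k * x k = -∑ i ∈ univ.erase k, a i * x i := by
    rw [eq_neg_iff_add_eq_zero, add_sum_erase univ (fun i => a i * x i) (mem_univ k), hx]
  rw [hk, dvd_neg]
  exact dvd_sum fun i hi => (hn i (ne_of_mem_erase hi)).mul_right _

theorem dvd_mul_of_sum_mul_eq_zero (hp : ∀ j, Prime (p j))
    (hpna : ∀ i j, i ≠ j → ¬Associated (p i) (p j))
    (ha : ∀ i, a i = ∏ j ∈ univ.erase i, p j ^ e i j)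
    (he : ∀ i j, i ≠ i₀ → j ≠ i₀ → i ≠ j → e i₀ j ≤ e i j) {x : ι → R}
    (hx : ∑ i, a i * x i = 0) {k : ι} (hk : k ≠ i₀) {c : R}
    (hc : Ideal.span {c} = Ideal.span {a i₀, a k}) : a i₀ ∣ x k * c := by
  have ha₀ : a i₀ = p k ^ e i₀ k * ∏ j ∈ (univ.erase i₀).erase k, p j ^ e i₀ j := by
    rw [ha i₀, ← mul_prod_erase _ _ (mem_erase.2 ⟨hk, mem_univ k⟩)]
  have hpk : ¬p k ∣ a k := by
    rw [ha k]
    exact not_dvd_prod_pow_of_notMem hp hpna _ (notMem_erase k univ)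
  have hxk : p k ^ e i₀ k ∣ x k :=
    pow_dvd_of_sum_mul_eq_zero hx (hp k) hpk fun i hi => pow_dvd_of_exponent_le ha he hk hi
  have hdc : ∏ j ∈ (univ.erase i₀).erase k, p j ^ e i₀ j ∣ c :=
    dvd_of_span_singleton_eq_span_pair hc (ha₀ ▸ dvd_mul_left _ _)
      (prod_erase_erase_dvd ha he hk)
  rw [ha₀]
  exact mul_dvd_mul hxk hdc

end Divisibility

section PivotSyzygy

variable {R : Type*} [CommRing R] {n : ℕ}

/-- The paper's `v(1, j+2)`: coordinates are counted from `0`, so the pivot `1` becomes `0`. -/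
def pivotSyzygy (a : Fin (n + 1) → R) (j : Fin n) : Fin (n + 1) → R :=
  fun k => if k = 0 then -a j.succ else if k = j.succ then a 0 else 0

variable {a : Fin (n + 1) → R}

@[simp]
theorem pivotSyzygy_zero (j : Fin n) : pivotSyzygy a j 0 = -a j.succ := if_pos rfl

@[simp]
theorem pivotSyzygy_succ (j i : Fin n) :
    pivotSyzygy a j i.succ = if i = j then a 0 else 0 := by
  simp [pivotSyzygy, Fin.succ_ne_zero]

theorem sum_mul_pivotSyzygy (j : Fin n) : ∑ i, a i * pivotSyzygy a j i = 0 := by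
  simp [Fin.sum_univ_succ, mul_comm]

theorem smul_eq_sum_pivotSyzygy {x : Fin (n + 1) → R} (hx : ∑ i, a i * x i = 0) :
    a 0 • x = ∑ j, x j.succ • pivotSyzygy a j := by
  rw [Fin.sum_univ_succ, add_eq_zero_iff_eq_neg'] at hx
  ext k
  cases k using Fin.cases with
  | zero => simp [hx, mul_comm]
  | succ i => simp [mul_comm]

variable {c : Fin n → R} {u : Fin n → Fin (n + 1) → R}

theorem ne_zero_of_smul_eq_pivotSyzygy {j : Fin n} (hu : c j • u j = pivotSyzygy a j)
    (ha : a 0 ≠ 0) : c j ≠ 0 := by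
  rintro hc
  have h := congrFun hu j.succ
  rw [hc, zero_smul, Pi.zero_apply, pivotSyzygy_succ, if_pos rfl] at h
  exact ha h.symm

variable [IsDomain R]

theorem sum_mul_eq_zero_of_smul_eq_pivotSyzygy {j : Fin n} (hu : c j • u j = pivotSyzygy a j)
    (ha : a 0 ≠ 0) : ∑ i, a i * u j i = 0 := by
  refine (mul_eq_zero.1 ?_).resolve_left (ne_zero_of_smul_eq_pivotSyzygy hu ha)
  rw [mul_sum, ← sum_mul_pivotSyzygy j, ← hu]
  exact sum_congr rfl fun i _ => by simp only [Pi.smul_apply, smul_eq_mul]; ring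

theorem linearIndependent_of_smul_eq_pivotSyzygy (hu : ∀ j, c j • u j = pivotSyzygy a j)
    (ha : a 0 ≠ 0) : LinearIndependent R u := by
  have hcu : ∀ j i, c j * u j i.succ = if i = j then a 0 else 0 := fun j i => by
    rw [← pivotSyzygy_succ, ← hu]; rfl
  have hdiag : ∀ j, u j j.succ ≠ 0 := fun j h => ha (by simpa [h] using (hcu j j).symm)
  have hoff : ∀ j i, i ≠ j → u j i.succ = 0 := fun j i hij =>
    (mul_eq_zero.1 (by rw [hcu, if_neg hij])).resolve_left
      (ne_zero_of_smul_eq_pivotSyzygy (hu j) ha)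
  rw [Fintype.linearIndependent_iff]
  intro t ht i
  have hi := congrFun ht i.succ
  simp only [Finset.sum_apply, Pi.smul_apply, smul_eq_mul, Pi.zero_apply] at hi
  rw [sum_eq_single i (fun j _ hj => by rw [hoff j i hj.symm, mul_zero])
    fun h => (h (mem_univ i)).elim] at hi
  exact (mul_eq_zero.1 hi).resolve_right (hdiag i)

theorem mem_span_of_smul_eq_pivotSyzygy (hu : ∀ j, c j • u j = pivotSyzygy a j)
    (ha : a 0 ≠ 0) {x : Fin (n + 1) → R} (hx : ∑ i, a i * x i = 0)
    (hdvd : ∀ j, a 0 ∣ x j.succ * c j) : x ∈ Submodule.span R (Set.range u) := by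
  choose t ht using hdvd
  have hxt : x = ∑ j, t j • u j := by
    refine smul_right_injective _ ha ?_
    simp only [smul_sum, smul_smul, ← ht, mul_smul, hu]
    exact smul_eq_sum_pivotSyzygy hx
  rw [hxt]
  exact Submodule.sum_mem _ fun j _ => Submodule.smul_mem _ _ (Submodule.subset_span ⟨j, rfl⟩)

end PivotSyzygy

theorem stmt_16_general {R : Type*} [CommRing R] [IsDomain R]
    {m : ℕ} (a : Fin (m + 2) → R)
    (p : Fin (m + 2) → R) (hp : ∀ j, Prime (p j))
    (hpna : ∀ i j, i ≠ j → ¬Associated (p i) (p j))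
    (e : Fin (m + 2) → Fin (m + 2) → ℕ)
    (ha : ∀ i, a i = ∏ j ∈ Finset.univ.erase i, p j ^ e i j)
    (he : ∀ i j : Fin (m + 2), i ≠ 0 → j ≠ 0 → i ≠ j → e 0 j ≤ e i j)
    (S : Submodule R (Fin (m + 2) → R))
    (hS : ∀ x, x ∈ S ↔ ∑ i, a i * x i = 0)
    (v : Fin (m + 1) → Fin (m + 2) → R)
    (hv : ∀ j k, v j k = if k = 0 then -a j.succ else if k = j.succ then a 0 else 0)
    (c : Fin (m + 1) → R) (hc : ∀ j, Ideal.span {c j} = Ideal.span {a 0, a j.succ})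
    (u : Fin (m + 1) → Fin (m + 2) → R)
    (hu : ∀ j, c j • u j = v j)
    (U1 : Submodule R (Fin (m + 2) → R))
    (hU1 : U1 = Submodule.span R (Set.range u)) :
    S = U1 ∧ ∃ b : Module.Basis (Fin (m + 1)) R S,
      ∀ j, (b j : Fin (m + 2) → R) = u j := by
  obtain rfl : v = pivotSyzygy a := funext fun j => funext (hv j)
  have ha₀ : a 0 ≠ 0 := by
    rw [ha]
    exact prod_ne_zero_iff.2 fun j _ => pow_ne_zero _ (hp j).ne_zero
  have hSU : S = Submodule.span R (Set.range u) := by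
    refine le_antisymm (fun x hx => ?_) (Submodule.span_le.2 ?_)
    · exact mem_span_of_smul_eq_pivotSyzygy hu ha₀ ((hS x).1 hx) fun j =>
        dvd_mul_of_sum_mul_eq_zero hp hpna ha he ((hS x).1 hx) (Fin.succ_ne_zero j) (hc j)
    · rintro _ ⟨j, rfl⟩
      exact (hS _).2 (sum_mul_eq_zero_of_smul_eq_pivotSyzygy (hu j) ha₀)
  refine ⟨hSU.trans hU1.symm, (Module.Basis.span
    (linearIndependent_of_smul_eq_pivotSyzygy hu ha₀)).map (LinearEquiv.ofEq _ _ hSU.symm),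
    fun j => ?_⟩
  simp [Module.Basis.map_apply, Module.Basis.span_apply]

/-- If `p₁,…,pₙ` are pairwise nonassociate primes and
`aᵢ = Π_{j≠i} pⱼ^{e_{i,j}}` with `e_{1,j} ≤ e_{i,j}` whenever `1, i, j` are
distinct, then `S = U₁` and `{u(1,2),…,u(1,n)}` is an `R`-basis of `S`.
Here `n = m + 2`; `v j = v(1, j+2)` and `u j = u(1, j+2)` for `j : Fin (m+1)`,
where `c j` is a gcd of `a₁` and `a_{j+2}`. -/
theorem stmt_16 {R : Type*} [CommRing R] [IsDomain R] [IsPrincipalIdealRing R]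
    {m : ℕ} (hm : 1 ≤ m) (a : Fin (m + 2) → R)
    (p : Fin (m + 2) → R) (hp : ∀ j, Prime (p j))
    (hpna : ∀ i j, i ≠ j → ¬Associated (p i) (p j))
    (e : Fin (m + 2) → Fin (m + 2) → ℕ)
    (ha : ∀ i, a i = ∏ j ∈ Finset.univ.erase i, p j ^ e i j)
    (he : ∀ i j : Fin (m + 2), i ≠ 0 → j ≠ 0 → i ≠ j → e 0 j ≤ e i j)
    (huni : Ideal.span (Set.range a) = ⊤)
    (S : Submodule R (Fin (m + 2) → R))
    (hS : ∀ x, x ∈ S ↔ ∑ i, a i * x i = 0)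
    (v : Fin (m + 1) → Fin (m + 2) → R)
    (hv : ∀ j k, v j k = if k = 0 then -a j.succ else if k = j.succ then a 0 else 0)
    (c : Fin (m + 1) → R) (hc : ∀ j, Ideal.span {c j} = Ideal.span {a 0, a j.succ})
    (u : Fin (m + 1) → Fin (m + 2) → R)
    (hu : ∀ j, c j • u j = v j)
    (U1 : Submodule R (Fin (m + 2) → R))
    (hU1 : U1 = Submodule.span R (Set.range u)) :
    S = U1 ∧ ∃ b : Module.Basis (Fin (m + 1)) R S,
      ∀ j, (b j : Fin (m + 2) → R) = u j :=
  stmt_16_general a p hp hpna e ha he S hS v hv c hc u hu U1 hU1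
end

section
/- Let π be any permutation of {2,…,n}. Let d_2,…,d_{n−1} be defined from (a_2,…,a_n) by d_i = a_1·(a_1,…,a_{i+1}) / ((a_1,a_{i+1})·(a_1,…,a_i)), and let d_2',…,d_{n−1}' be defined by the same formula from (a_{π(2)},…,a_{π(n)}). Then for any prime p of R, the multiset of p-parts of d_2,…,d_{n−1} equals the multiset of p-parts of d_2',…,d_{n−1}' (equivalently, the multiset of p-adic valuations of the d_i coincides with that of the d_i'). -/
/-!
Fix a prime `q`, write `v` for the `q`-adic valuation and put `A = v(a₁)`,
`e_j = v((a₁, a_j))` and `p_t = v((a₁,…,a_t))`, so that `p` is the running minimum of the `e_j`.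
Then `v(d_i) = A + p_{i+1} - e_{i+1} - p_i = A - max(e_{i+1}, p_i)`. At each step of a running
minimum the larger of `e_{i+1}` and `p_i` is discarded and the smaller one is kept, so the
discarded values together with the final minimum `p_n` are exactly the `e_j`, counted with
multiplicity. Hence the multiset of the `v(d_i)` only depends on `A`, on the multiset of the `e_j`
and on `v((a₁,…,a_n))`, none of which changes when `a₂,…,a_n` are permuted.
-/

theorem dvd_iff_forall_dvd_of_span_singleton_eq {R : Type*} [CommSemiring R] {x y : R}
    {S : Set R} (h : Ideal.span {x} = Ideal.span S) : y ∣ x ↔ ∀ z ∈ S, y ∣ z := by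
  rw [← Ideal.span_singleton_le_span_singleton, h, Ideal.span_le]
  simp only [Set.subset_def, SetLike.mem_coe, Ideal.mem_span_singleton]

theorem exists_perm_eq_comp_of_perm_ofFn {α : Type*} [LinearOrder α] {n : ℕ}
    {f g : Fin n → α} (h : (List.ofFn f).Perm (List.ofFn g)) :
    ∃ σ : Equiv.Perm (Fin n), ∀ i, f i = g (σ i) := by
  have hsorted : (List.ofFn (f ∘ Tuple.sort f)).Perm (List.ofFn (g ∘ Tuple.sort g)) :=
    ((Tuple.sort f).ofFn_comp_perm f).trans (h.trans ((Tuple.sort g).ofFn_comp_perm g).symm)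
  have heq : f ∘ Tuple.sort f = g ∘ Tuple.sort g :=
    List.ofFn_injective (hsorted.eq_of_sortedLE (Tuple.monotone_sort f).sortedLE_ofFn
      (Tuple.monotone_sort g).sortedLE_ofFn)
  refine ⟨(Tuple.sort f).symm.trans (Tuple.sort g), fun i => ?_⟩
  simpa using congrFun heq ((Tuple.sort f).symm i)

theorem coe_ofFn_eq_cons_ofFn_max_of_running_min {α : Type*} [LinearOrder α] :
    ∀ {k : ℕ} (e p : Fin (k + 1) → α), p 0 = e 0 →
      (∀ j : Fin k, p j.succ = min (p j.castSucc) (e j.succ)) →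
      (List.ofFn e : Multiset α) =
        p (Fin.last k) ::ₘ (List.ofFn fun i : Fin k => max (e i.succ) (p i.castSucc))
  | 0, e, p, h0, _ => by simp [h0]
  | k + 1, e, p, h0, hs => by
    have ih := coe_ofFn_eq_cons_ofFn_max_of_running_min (e ∘ Fin.castSucc) (p ∘ Fin.castSucc) h0
      (fun j => by simpa [Fin.succ_castSucc, -Fin.castSucc_succ] using hs j.castSucc)
    rw [List.ofFn_succ' e, List.ofFn_succ' fun i : Fin (k + 1) => max (e i.succ) (p i.castSucc),
      List.concat_eq_append, List.concat_eq_append, ← Multiset.coe_add, ← Multiset.coe_add]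
    simp only [Function.comp_def] at ih
    rw [ih, ← Fin.succ_last, hs (Fin.last k)]
    simp only [Fin.succ_castSucc, Multiset.coe_singleton, ← Multiset.singleton_add]
    rcases le_total (p (Fin.last k).castSucc) (e (Fin.last k).succ) with h | h
    · rw [min_eq_left h, max_eq_left h]
      abel
    · rw [min_eq_right h, max_eq_right h]
      abel

theorem emultiplicity_eq_min_of_pow_dvd_iff {α : Type*} [Monoid α] {q x y z : α}
    (h : ∀ n : ℕ, q ^ n ∣ z ↔ q ^ n ∣ x ∧ q ^ n ∣ y) :
    emultiplicity q z = min (emultiplicity q x) (emultiplicity q y) := by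
  refine le_antisymm (le_min ?_ ?_) (ENat.forall_natCast_le_iff_le.mp fun n hn => ?_)
  · exact emultiplicity_le_emultiplicity_iff.mpr fun n hn => ((h n).mp hn).1
  · exact emultiplicity_le_emultiplicity_iff.mpr fun n hn => ((h n).mp hn).2
  · rw [le_min_iff, ← pow_dvd_iff_le_emultiplicity, ← pow_dvd_iff_le_emultiplicity] at hn
    exact pow_dvd_iff_le_emultiplicity.mp ((h n).mpr hn)

theorem dvd_iff_dvd_and_dvd_of_span_eq_span_pair {R : Type*} [CommSemiring R] {x y z w : R}
    (h : Ideal.span {w} = Ideal.span {x, y}) : z ∣ w ↔ z ∣ x ∧ z ∣ y := by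
  simp [dvd_iff_forall_dvd_of_span_singleton_eq h]

section PartialGcd

variable {R : Type*} [CommRing R] {m : ℕ} {a : Fin (m + 2) → R} {g : ℕ → R}
  {c : Fin (m + 1) → R} {y : R}

def IsPartialGcd (a : Fin (m + 2) → R) (g : ℕ → R) : Prop :=
  ∀ t, Ideal.span {g t} = Ideal.span {x | ∃ i : Fin (m + 2), (i : ℕ) ≤ t ∧ x = a i}

theorem dvd_partialGcd_iff (hg : IsPartialGcd a g) (t : ℕ) :
    y ∣ g t ↔ ∀ i : Fin (m + 2), (i : ℕ) ≤ t → y ∣ a i := by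
  rw [dvd_iff_forall_dvd_of_span_singleton_eq (hg t)]
  aesop

theorem dvd_partialGcd_zero_iff (hg : IsPartialGcd a g) : y ∣ g 0 ↔ y ∣ a 0 := by
  simp [dvd_partialGcd_iff hg]

theorem dvd_partialGcd_last_iff (hg : IsPartialGcd a g) : y ∣ g (m + 1) ↔ ∀ i, y ∣ a i := by
  simp [dvd_partialGcd_iff hg, Fin.is_le]

theorem partialGcd_dvd (hg : IsPartialGcd a g) (t : ℕ) : g t ∣ a 0 :=
  (dvd_partialGcd_iff hg t).mp dvd_rfl 0 (Nat.zero_le t)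

theorem dvd_partialGcd_succ_iff (hg : IsPartialGcd a g)
    (hc : ∀ j, Ideal.span {c j} = Ideal.span {a 0, a j.succ}) (j : Fin (m + 1)) :
    y ∣ g ((j : ℕ) + 1) ↔ y ∣ g j ∧ y ∣ c j := by
  rw [dvd_partialGcd_iff hg, dvd_partialGcd_iff hg,
    dvd_iff_dvd_and_dvd_of_span_eq_span_pair (hc j)]
  constructor
  · intro h
    exact ⟨fun i hi => h i (by omega), h 0 (by simp), h j.succ (by simp)⟩
  · rintro ⟨hle, -, hsucc⟩ i hi
    rcases Nat.lt_or_ge i (j + 1) with hlt | hge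
    · exact hle i (by omega)
    · rwa [show i = j.succ from Fin.ext (by rw [Fin.val_succ]; omega)]

theorem dvd_partialGcd_one_iff (hg : IsPartialGcd a g)
    (hc : ∀ j, Ideal.span {c j} = Ideal.span {a 0, a j.succ}) : y ∣ g 1 ↔ y ∣ c 0 := by
  have hc0 : c 0 ∣ a 0 := ((dvd_iff_dvd_and_dvd_of_span_eq_span_pair (hc 0)).mp dvd_rfl).1
  simpa [dvd_partialGcd_zero_iff hg, and_iff_right_of_imp fun h => dvd_trans h hc0]
    using dvd_partialGcd_succ_iff hg hc (y := y) 0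

variable {q : R} {d : Fin m → R}

theorem emultiplicity_add_max_eq [IsDomain R] [WfDvdMonoid R] (hq : Prime q) (ha : a 0 ≠ 0)
    (hg : IsPartialGcd a g)
    (hc : ∀ j, Ideal.span {c j} = Ideal.span {a 0, a j.succ})
    (hd : ∀ i : Fin m, d i * (c i.succ * g ((i : ℕ) + 1)) = a 0 * g ((i : ℕ) + 2))
    (i : Fin m) :
    emultiplicity q (d i) + max (emultiplicity q (c i.succ)) (emultiplicity q (g ((i : ℕ) + 1))) =
      emultiplicity q (a 0) := by
  have hstep : emultiplicity q (g ((i : ℕ) + 2)) =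
      min (emultiplicity q (g ((i : ℕ) + 1))) (emultiplicity q (c i.succ)) :=
    emultiplicity_eq_min_of_pow_dvd_iff fun n => dvd_partialGcd_succ_iff hg hc i.succ
  have hfin : min (emultiplicity q (g ((i : ℕ) + 1))) (emultiplicity q (c i.succ)) ≠ ⊤ := by
    rw [← hstep]
    exact ne_top_of_le_ne_top (emultiplicity_lt_top.2 (.of_prime_left hq ha)).ne
      (emultiplicity_le_emultiplicity_of_dvd_right (partialGcd_dvd hg _))
  have h := congrArg (emultiplicity q) (hd i)
  rw [emultiplicity_mul hq, emultiplicity_mul hq, emultiplicity_mul hq, hstep] at h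
  rw [← (ENat.addLECancellable_of_ne_top hfin).inj_left, ← h, add_assoc, min_comm, max_add_min]

theorem coe_ofFn_emultiplicity_eq_map_erase [IsDomain R] [WfDvdMonoid R] (hq : Prime q)
    (ha : a 0 ≠ 0) (hg : IsPartialGcd a g)
    (hc : ∀ j, Ideal.span {c j} = Ideal.span {a 0, a j.succ})
    (hd : ∀ i : Fin m, d i * (c i.succ * g ((i : ℕ) + 1)) = a 0 * g ((i : ℕ) + 2)) :
    (List.ofFn fun i => emultiplicity q (d i) : Multiset ℕ∞) =
      ((List.ofFn fun j => emultiplicity q (c j) : Multiset ℕ∞).erase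
        (emultiplicity q (g (m + 1)))).map (emultiplicity q (a 0) - ·) := by
  have hrun := coe_ofFn_eq_cons_ofFn_max_of_running_min (fun j => emultiplicity q (c j))
    (fun j : Fin (m + 1) => emultiplicity q (g ((j : ℕ) + 1))) ?_ ?_
  · rw [hrun]
    simp only [Fin.val_last, Fin.val_castSucc, Multiset.erase_cons_head, Multiset.map_coe,
      List.map_ofFn]
    congr 2
    funext i
    have h := emultiplicity_add_max_eq hq ha hg hc hd i
    have hmax_ne_top := ne_top_of_le_ne_top (emultiplicity_lt_top.2 (.of_prime_left hq ha)).ne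
      (h ▸ le_add_self)
    exact (ENat.addLECancellable_of_ne_top hmax_ne_top).eq_tsub_of_add_eq h
  · exact emultiplicity_eq_emultiplicity_iff.mpr fun n => dvd_partialGcd_one_iff hg hc
  · intro j
    exact emultiplicity_eq_min_of_pow_dvd_iff fun n => dvd_partialGcd_succ_iff hg hc j.succ

end PartialGcd

theorem stmt_17_general {R : Type*} [CommRing R] [IsDomain R] [IsPrincipalIdealRing R]
    {m : ℕ} (a : Fin (m + 2) → R) (ha1 : a 0 ≠ 0)
    (π : Equiv.Perm (Fin (m + 1)))
    (a' : Fin (m + 2) → R) (ha'0 : a' 0 = a 0)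
    (ha' : ∀ j : Fin (m + 1), a' j.succ = a (π j).succ)
    (g g' : ℕ → R)
    (hg : ∀ t, Ideal.span {g t} =
      Ideal.span {x | ∃ i : Fin (m + 2), (i : ℕ) ≤ t ∧ x = a i})
    (hg' : ∀ t, Ideal.span {g' t} =
      Ideal.span {x | ∃ i : Fin (m + 2), (i : ℕ) ≤ t ∧ x = a' i})
    (c c' : Fin (m + 1) → R)
    (hc : ∀ j, Ideal.span {c j} = Ideal.span {a 0, a j.succ})
    (hc' : ∀ j, Ideal.span {c' j} = Ideal.span {a' 0, a' j.succ})
    (d d' : Fin m → R)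
    (hd : ∀ i : Fin m, d i * (c i.succ * g ((i : ℕ) + 1)) = a 0 * g ((i : ℕ) + 2))
    (hd' : ∀ i : Fin m, d' i * (c' i.succ * g' ((i : ℕ) + 1)) = a' 0 * g' ((i : ℕ) + 2)) :
    ∀ q : R, Prime q → ∃ σ : Equiv.Perm (Fin m),
      ∀ (i : Fin m) (k : ℕ), q ^ k ∣ d i ↔ q ^ k ∣ d' (σ i) := by
  intro q hq
  have hc_perm (j : Fin (m + 1)) : emultiplicity q (c' j) = emultiplicity q (c (π j)) :=
    emultiplicity_eq_of_associated_right <|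
      Ideal.span_singleton_eq_span_singleton.mp (by rw [hc', ha'0, ha', hc])
  have hc_multiset : (List.ofFn fun j => emultiplicity q (c' j) : Multiset ℕ∞) =
      List.ofFn fun j => emultiplicity q (c j) := by
    simp only [hc_perm]
    exact Multiset.coe_eq_coe.mpr (π.ofFn_comp_perm fun j => emultiplicity q (c j))
  have hg_last : emultiplicity q (g' (m + 1)) = emultiplicity q (g (m + 1)) :=
    emultiplicity_eq_emultiplicity_iff.mpr fun n => by
      rw [dvd_partialGcd_last_iff hg', dvd_partialGcd_last_iff hg,
        Fin.forall_fin_succ (P := fun i => q ^ n ∣ a' i),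
        Fin.forall_fin_succ (P := fun i => q ^ n ∣ a i), ha'0]
      simp only [ha', π.forall_congr_right (q := fun j => q ^ n ∣ a j.succ)]
  have hd_multiset : (List.ofFn fun i => emultiplicity q (d i) : Multiset ℕ∞) =
      List.ofFn fun i => emultiplicity q (d' i) := by
    rw [coe_ofFn_emultiplicity_eq_map_erase hq ha1 hg hc hd,
      coe_ofFn_emultiplicity_eq_map_erase hq (ha'0 ▸ ha1) hg' hc' hd', ha'0, hc_multiset, hg_last]
  obtain ⟨σ, hσ⟩ := exists_perm_eq_comp_of_perm_ofFn (Multiset.coe_eq_coe.mp hd_multiset)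
  exact ⟨σ, fun i k => by rw [pow_dvd_iff_le_emultiplicity, pow_dvd_iff_le_emultiplicity, hσ]⟩

/-- Lemma `permutation`: for any permutation `π` of `{2,…,n}`, and any prime
`q` of `R`, the multiset of `q`-parts of `d₂,…,d_{n−1}` (defined from
`(a₂,…,aₙ)`) coincides with that of `d₂',…,d_{n−1}'` (defined from the
permuted tuple). Equality of `q`-parts is expressed as equality of `q`-adic
valuations: `∀ k, q^k ∣ dᵢ ↔ q^k ∣ d'_{σ(i)}`. Here `n = m + 2`;
`g t` (resp. `g' t`) is a gcd of `a₁,…,a_{t+1}` (resp. of the permuted tuple),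
`c j` is a gcd of `a₁` and `a_{j+2}`, and `d i` (paper index `i+2`) is defined
by the exact-division identity
`d i · ((a₁,a_{i+3})·(a₁,…,a_{i+2})) = a₁·(a₁,…,a_{i+3})`. -/
theorem stmt_17 {R : Type*} [CommRing R] [IsDomain R] [IsPrincipalIdealRing R]
    {m : ℕ} (hm : 1 ≤ m) (a : Fin (m + 2) → R) (ha1 : a 0 ≠ 0)
    (hgcd : Ideal.span (Set.range a) = ⊤)
    (π : Equiv.Perm (Fin (m + 1)))
    (a' : Fin (m + 2) → R) (ha'0 : a' 0 = a 0)
    (ha' : ∀ j : Fin (m + 1), a' j.succ = a (π j).succ)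
    (g g' : ℕ → R)
    (hg : ∀ t, Ideal.span {g t} =
      Ideal.span {x | ∃ i : Fin (m + 2), (i : ℕ) ≤ t ∧ x = a i})
    (hg' : ∀ t, Ideal.span {g' t} =
      Ideal.span {x | ∃ i : Fin (m + 2), (i : ℕ) ≤ t ∧ x = a' i})
    (c c' : Fin (m + 1) → R)
    (hc : ∀ j, Ideal.span {c j} = Ideal.span {a 0, a j.succ})
    (hc' : ∀ j, Ideal.span {c' j} = Ideal.span {a' 0, a' j.succ})
    (d d' : Fin m → R)
    (hd : ∀ i : Fin m, d i * (c i.succ * g ((i : ℕ) + 1)) = a 0 * g ((i : ℕ) + 2))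
    (hd' : ∀ i : Fin m, d' i * (c' i.succ * g' ((i : ℕ) + 1)) = a' 0 * g' ((i : ℕ) + 2)) :
    ∀ q : R, Prime q → ∃ σ : Equiv.Perm (Fin m),
      ∀ (i : Fin m) (k : ℕ), q ^ k ∣ d i ↔ q ^ k ∣ d' (σ i) :=
  stmt_17_general a ha1 π a' ha'0 ha' g g' hg hg' c c' hc hc' d d' hd hd'
end

section
/- Suppose R is a principal ideal domain and let a ∈ R^n be the column vector with entries a_1,…,a_n. If E ∈ GL_n(R) satisfies E·a = e_1, where e_1 is the first standard basis vector of R^n, then rows 2,…,n of E form an R-basis of S. In particular, S is a free R-module of rank n−1. -/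
/-!
Since `E` is invertible, its rows form a basis of `Rⁿ`, and `E a = e₁` says that the coordinate
functional of this basis at the first row is `x ↦ x ⬝ a`. Hence `S` is the kernel of that
coordinate functional, which is freely spanned by the remaining basis vectors, the rows `2,…,n`.
-/

namespace Module.Basis

variable {R M : Type*} [Semiring R] [AddCommMonoid M] [Module R M] {m : ℕ}

theorem span_range_comp_succ_eq_ker_coord_zero (b : Basis (Fin (m + 1)) R M) :
    Submodule.span R (Set.range (b ∘ Fin.succ)) = LinearMap.ker (b.coord 0) := by
  apply le_antisymm
  · rw [Submodule.span_le]
    rintro _ ⟨i, rfl⟩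
    simp [Fin.succ_ne_zero i]
  · intro x hx
    rw [← b.sum_repr x, Fin.sum_univ_succ]
    simp only [LinearMap.mem_ker, coord_apply] at hx
    simp only [hx, zero_smul, zero_add]
    exact Submodule.sum_mem _ fun i _ => Submodule.smul_mem _ _ (Submodule.subset_span ⟨i, rfl⟩)

noncomputable def kerCoordZero (b : Basis (Fin (m + 1)) R M) :
    Basis (Fin m) R (LinearMap.ker (b.coord 0)) :=
  (Basis.span (b.linearIndependent.comp _ (Fin.succ_injective m))).map
    (LinearEquiv.ofEq _ _ b.span_range_comp_succ_eq_ker_coord_zero)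

@[simp]
theorem coe_kerCoordZero_apply (b : Basis (Fin (m + 1)) R M) (i : Fin m) :
    (b.kerCoordZero i : M) = b i.succ := by
  simp [kerCoordZero]

end Module.Basis

namespace Matrix

variable {n R : Type*} [Fintype n] [DecidableEq n] [CommRing R]
  {E : Matrix n n R} (hE : IsUnit E.det)

noncomputable def vecMulLinearEquiv : (n → R) ≃ₗ[R] (n → R) :=
  .ofLinearMap E.vecMulLinear E⁻¹.vecMulLinear
    (LinearMap.ext fun x => by simp [vecMul_vecMul, nonsing_inv_mul _ hE])
    (LinearMap.ext fun x => by simp [vecMul_vecMul, mul_nonsing_inv _ hE])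

noncomputable def rowBasis : Module.Basis n R (n → R) :=
  .ofEquivFun (vecMulLinearEquiv hE).symm

@[simp]
theorem rowBasis_apply (i : n) : rowBasis hE i = E i := by
  simp [rowBasis, Module.Basis.coe_ofEquivFun, vecMulLinearEquiv, single_vecMul, row_def]

theorem rowBasis_repr_apply (x : n → R) (i : n) : (rowBasis hE).repr x i = (x ᵥ* E⁻¹) i := by
  simp [rowBasis, vecMulLinearEquiv]

theorem rowBasis_coord_eq_dotProduct {a : n → R} {i : n} (hEa : E *ᵥ a = Pi.single i 1)
    (x : n → R) : (rowBasis hE).coord i x = x ⬝ᵥ a :=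
  calc (rowBasis hE).coord i x = x ᵥ* E⁻¹ ⬝ᵥ E *ᵥ a := by
        rw [hEa, dotProduct_single, mul_one, Module.Basis.coord_apply, rowBasis_repr_apply]
    _ = x ⬝ᵥ a := by
        rw [dotProduct_mulVec, vecMul_vecMul, nonsing_inv_mul _ hE, vecMul_one]

end Matrix

theorem stmt_19_general {R : Type*} [CommRing R] [IsDomain R]
    {m : ℕ} (a : Fin (m + 1) → R)
    (S : Submodule R (Fin (m + 1) → R))
    (hS : ∀ x, x ∈ S ↔ ∑ i, a i * x i = 0)
    (E : Matrix (Fin (m + 1)) (Fin (m + 1)) R) (hE : IsUnit E.det)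
    (hEa : E.mulVec a = Pi.single 0 1) :
    (∃ b : Module.Basis (Fin m) R S,
      ∀ (i : Fin m) (j : Fin (m + 1)), (b i : Fin (m + 1) → R) j = E i.succ j) ∧
    Module.Free R S ∧ Module.finrank R S = m := by
  have hker : LinearMap.ker ((Matrix.rowBasis hE).coord 0) = S := by
    ext x
    rw [LinearMap.mem_ker, Matrix.rowBasis_coord_eq_dotProduct hE hEa, dotProduct_comm, hS]
    rfl
  let b := (Matrix.rowBasis hE).kerCoordZero.map (LinearEquiv.ofEq _ _ hker)
  refine ⟨⟨b, fun i j => ?_⟩, .of_basis b, by rw [Module.finrank_eq_card_basis b, Fintype.card_fin]⟩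
  simp [b]

/-- If `E ∈ GLₙ(R)` satisfies `E·a = e₁`, then rows `2,…,n` of `E` form an
`R`-basis of `S`; in particular `S` is free of rank `n − 1`.
Here `n = m + 1`. -/
theorem stmt_19 {R : Type*} [CommRing R] [IsDomain R] [IsPrincipalIdealRing R]
    {m : ℕ} (hm : 1 ≤ m) (a : Fin (m + 1) → R)
    (huni : Ideal.span (Set.range a) = ⊤)
    (S : Submodule R (Fin (m + 1) → R))
    (hS : ∀ x, x ∈ S ↔ ∑ i, a i * x i = 0)
    (E : Matrix (Fin (m + 1)) (Fin (m + 1)) R) (hE : IsUnit E.det)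
    (hEa : E.mulVec a = Pi.single 0 1) :
    (∃ b : Module.Basis (Fin m) R S,
      ∀ (i : Fin m) (j : Fin (m + 1)), (b i : Fin (m + 1) → R) j = E i.succ j) ∧
    Module.Free R S ∧ Module.finrank R S = m :=
  stmt_19_general a S hS E hE hEa
end
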